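/- arXiv:2001.00812 — 6 statements merged into one kernel-verified Lean document; each statement's English description precedes it below -/
import Mathlib

section
/- The first-order 3S-SAV scheme (φⁿ⁺¹ - φⁿ)/Δt = Gμⁿ⁺¹, μⁿ⁺¹ = Lφⁿ⁺¹ + χⁿ, (rⁿ⁺¹ + rⁿ)(rⁿ⁺¹ - rⁿ)/Δt = (χⁿ, (φⁿ⁺¹ - φⁿ)/Δt), with χⁿ = (rⁿ/√(E₁(φⁿ)+C)) F'(φⁿ), satisfies the discrete energy law [½(φⁿ⁺¹, Lφⁿ⁺¹) + (rⁿ⁺¹)²] - [½(φⁿ, Lφⁿ) + (rⁿ)²] ≤ Δt (Gμⁿ⁺¹, μⁿ⁺¹) ≤ 0. -/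
open RealInnerProductSpace

/-- discrete energy law for the first-order 3S-SAV scheme
`(φⁿ⁺¹-φⁿ)/Δt = Gμⁿ⁺¹`, `μⁿ⁺¹ = Lφⁿ⁺¹ + χⁿ`,
`(rⁿ⁺¹+rⁿ)(rⁿ⁺¹-rⁿ)/Δt = (χⁿ, (φⁿ⁺¹-φⁿ)/Δt)`. -/
theorem threeS_SAV_first_order_energy_law
    {H : Type*} [NormedAddCommGroup H] [InnerProductSpace ℝ H]
    (L G : H →ₗ[ℝ] H)
    (hLsym : ∀ u v : H, ⟪L u, v⟫ = ⟪u, L v⟫)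
    (hLnn : ∀ u : H, 0 ≤ ⟪L u, u⟫)
    (hGnp : ∀ v : H, ⟪G v, v⟫ ≤ 0)
    (Δt : ℝ) (hΔt : 0 < Δt)
    (φ₀ φ₁ μ₁ χ : H) (r₀ r₁ : ℝ)
    (h1 : (Δt)⁻¹ • (φ₁ - φ₀) = G μ₁)
    (h2 : μ₁ = L φ₁ + χ)
    (h3 : (r₁ + r₀) * ((r₁ - r₀) / Δt) = ⟪χ, (Δt)⁻¹ • (φ₁ - φ₀)⟫) :
    ((1 / 2) * ⟪φ₁, L φ₁⟫ + r₁ ^ 2) - ((1 / 2) * ⟪φ₀, L φ₀⟫ + r₀ ^ 2) ≤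
        Δt * ⟪G μ₁, μ₁⟫ ∧
      Δt * ⟪G μ₁, μ₁⟫ ≤ 0 := by
  set d := φ₁ - φ₀ with hd
  have hdG : d = Δt • G μ₁ := by
    rw [← h1, smul_smul, mul_inv_cancel₀ hΔt.ne', one_smul]
  -- inner d μ₁ = Δt * ⟪G μ₁, μ₁⟫
  have hkey : ⟪d, μ₁⟫ = Δt * ⟪G μ₁, μ₁⟫ := by
    rw [hdG, real_inner_smul_left]
  -- r part
  have hr : ⟪d, χ⟫ = r₁ ^ 2 - r₀ ^ 2 := by
    have h3' : (r₁ + r₀) * (r₁ - r₀) = ⟪χ, d⟫ := by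
      have := h3
      rw [real_inner_smul_right] at this
      field_simp at this ⊢
      linarith [this]
    rw [real_inner_comm, ← h3']; ring
  -- L part
  have hL : ⟪d, L φ₁⟫ =
      (1/2) * ⟪φ₁, L φ₁⟫ - (1/2) * ⟪φ₀, L φ₀⟫ + (1/2) * ⟪d, L d⟫ := by
    have e : ∀ u v : H, ⟪u, L v⟫ = ⟪v, L u⟫ := fun u v => by
      rw [← hLsym v u, real_inner_comm]
    simp only [hd, map_sub, inner_sub_left, inner_sub_right]
    rw [e φ₀ φ₁]
    ring
  have hdLd : 0 ≤ ⟪d, L d⟫ := by rw [← hLsym]; exact hLnn d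
  have hexp : ⟪d, μ₁⟫ = ⟪d, L φ₁⟫ + ⟪d, χ⟫ := by
    rw [h2, inner_add_right]
  constructor
  · nlinarith [hkey, hr, hL, hdLd, hexp]
  · nlinarith [hGnp μ₁, hΔt]
end

section
/- The first-order 3S-SAV scheme with squared auxiliary variable, (φⁿ⁺¹ - φⁿ)/Δt = Gμⁿ⁺¹, μⁿ⁺¹ = Lφⁿ⁺¹ + χⁿ, ((rⁿ⁺¹)² - (rⁿ)²)/Δt = (χⁿ, (φⁿ⁺¹ - φⁿ)/Δt), satisfies [½(φⁿ⁺¹, Lφⁿ⁺¹) + (rⁿ⁺¹)²] - [½(φⁿ, Lφⁿ) + (rⁿ)²] ≤ Δt (Gμⁿ⁺¹, μⁿ⁺¹) ≤ 0. -/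
open RealInnerProductSpace

/-- discrete energy law for the first-order 3S-SAV scheme with
squared auxiliary variable: `(φⁿ⁺¹-φⁿ)/Δt = Gμⁿ⁺¹`, `μⁿ⁺¹ = Lφⁿ⁺¹ + χⁿ`,
`((rⁿ⁺¹)² - (rⁿ)²)/Δt = (χⁿ, (φⁿ⁺¹-φⁿ)/Δt)`; here `r₀sq, r₁sq` stand for
`(rⁿ)²` and `(rⁿ⁺¹)²`. -/
theorem threeS_SAV_squared_variable_energy_law
    {H : Type*} [NormedAddCommGroup H] [InnerProductSpace ℝ H]
    (L G : H →ₗ[ℝ] H)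
    (hLsym : ∀ u v : H, ⟪L u, v⟫ = ⟪u, L v⟫)
    (hLnn : ∀ u : H, 0 ≤ ⟪L u, u⟫)
    (hGnp : ∀ v : H, ⟪G v, v⟫ ≤ 0)
    (Δt : ℝ) (hΔt : 0 < Δt)
    (φ₀ φ₁ μ₁ χ : H) (r₀sq r₁sq : ℝ)
    (h1 : (Δt)⁻¹ • (φ₁ - φ₀) = G μ₁)
    (h2 : μ₁ = L φ₁ + χ)
    (h3 : (r₁sq - r₀sq) / Δt = ⟪χ, (Δt)⁻¹ • (φ₁ - φ₀)⟫) :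
    ((1 / 2) * ⟪φ₁, L φ₁⟫ + r₁sq) - ((1 / 2) * ⟪φ₀, L φ₀⟫ + r₀sq) ≤
        Δt * ⟪G μ₁, μ₁⟫ ∧
      Δt * ⟪G μ₁, μ₁⟫ ≤ 0 := by
  have hne : Δt ≠ 0 := hΔt.ne'
  have hd : φ₁ - φ₀ = Δt • G μ₁ := by
    rw [← h1, smul_smul, mul_inv_cancel₀ hne, one_smul]
  have hmain : Δt * ⟪G μ₁, μ₁⟫ = ⟪φ₁ - φ₀, μ₁⟫ := by
    rw [hd, real_inner_smul_left]
  have hr : r₁sq - r₀sq = ⟪χ, φ₁ - φ₀⟫ := by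
    rw [real_inner_smul_right] at h3
    field_simp at h3
    linarith
  have hnn : 0 ≤ ⟪L (φ₁ - φ₀), φ₁ - φ₀⟫ := hLnn _
  have hexp : ⟪L (φ₁ - φ₀), φ₁ - φ₀⟫
      = ⟪L φ₁, φ₁⟫ - 2 * ⟪φ₀, L φ₁⟫ + ⟪L φ₀, φ₀⟫ := by
    rw [map_sub, inner_sub_left, inner_sub_right, inner_sub_right,
      hLsym φ₁ φ₀, real_inner_comm (L φ₀) φ₁, hLsym φ₀ φ₁]
    ring
  have hμ : ⟪φ₁ - φ₀, μ₁⟫ = ⟪φ₁, L φ₁⟫ - ⟪φ₀, L φ₁⟫ + ⟪χ, φ₁ - φ₀⟫ := by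
    rw [h2, inner_add_right, inner_sub_left, real_inner_comm χ]
  have h11 : ⟪φ₁, L φ₁⟫ = ⟪L φ₁, φ₁⟫ := (real_inner_comm _ _)
  have h00 : ⟪φ₀, L φ₀⟫ = ⟪L φ₀, φ₀⟫ := (real_inner_comm _ _)
  constructor
  · rw [hmain, hμ]
    nlinarith [hnn, hexp]
  · exact mul_nonpos_of_nonneg_of_nonpos hΔt.le (hGnp μ₁)
end

section
/- The first-order 3S-SAV scheme with non-squared auxiliary variable η, namely (φⁿ⁺¹ - φⁿ)/Δt = Gμⁿ⁺¹, μⁿ⁺¹ = Lφⁿ⁺¹ + χⁿ, (ηⁿ⁺¹ - ηⁿ)/Δt = (χⁿ, (φⁿ⁺¹ - φⁿ)/Δt), satisfies the unconditional discrete energy dissipation [½(φⁿ⁺¹, Lφⁿ⁺¹) + ηⁿ⁺¹] - [½(φⁿ, Lφⁿ) + ηⁿ] ≤ Δt (Gμⁿ⁺¹, μⁿ⁺¹) ≤ 0, for every Δt > 0. -/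
open RealInnerProductSpace

/-- unconditional discrete energy dissipation for the first-order
3S-SAV scheme with (non-squared) auxiliary variable `η`:
`(φⁿ⁺¹-φⁿ)/Δt = Gμⁿ⁺¹`, `μⁿ⁺¹ = Lφⁿ⁺¹ + χⁿ`,
`(ηⁿ⁺¹-ηⁿ)/Δt = (χⁿ, (φⁿ⁺¹-φⁿ)/Δt)`, for every `Δt > 0`. -/
theorem threeS_SAV_eta_energy_law
    {H : Type*} [NormedAddCommGroup H] [InnerProductSpace ℝ H]
    (L G : H →ₗ[ℝ] H)
    (hLsym : ∀ u v : H, ⟪L u, v⟫ = ⟪u, L v⟫)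
    (hLnn : ∀ u : H, 0 ≤ ⟪L u, u⟫)
    (hGnp : ∀ v : H, ⟪G v, v⟫ ≤ 0)
    (Δt : ℝ) (hΔt : 0 < Δt)
    (φ₀ φ₁ μ₁ χ : H) (η₀ η₁ : ℝ)
    (h1 : (Δt)⁻¹ • (φ₁ - φ₀) = G μ₁)
    (h2 : μ₁ = L φ₁ + χ)
    (h3 : (η₁ - η₀) / Δt = ⟪χ, (Δt)⁻¹ • (φ₁ - φ₀)⟫) :
    ((1 / 2) * ⟪φ₁, L φ₁⟫ + η₁) - ((1 / 2) * ⟪φ₀, L φ₀⟫ + η₀) ≤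
        Δt * ⟪G μ₁, μ₁⟫ ∧
      Δt * ⟪G μ₁, μ₁⟫ ≤ 0 := by
  have hdiff : φ₁ - φ₀ = Δt • G μ₁ := by
    rw [← h1, smul_smul, mul_inv_cancel₀ hΔt.ne', one_smul]
  have heta : η₁ - η₀ = ⟪χ, φ₁ - φ₀⟫ := by
    have := h3
    rw [real_inner_smul_right] at this
    field_simp at this
    linarith
  have hkey : ⟪φ₁ - φ₀, μ₁⟫ = Δt * ⟪G μ₁, μ₁⟫ := by
    rw [hdiff, real_inner_smul_left]
  have hGle : Δt * ⟪G μ₁, μ₁⟫ ≤ 0 :=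
    mul_nonpos_of_nonneg_of_nonpos hΔt.le (hGnp μ₁)
  refine ⟨?_, hGle⟩
  have hLd : 0 ≤ ⟪L (φ₁ - φ₀), φ₁ - φ₀⟫ := hLnn _
  have hexp : ⟪φ₁ - φ₀, μ₁⟫ =
      (1/2) * ⟪φ₁, L φ₁⟫ - (1/2) * ⟪φ₀, L φ₀⟫
        + (1/2) * ⟪L (φ₁ - φ₀), φ₁ - φ₀⟫ + ⟪χ, φ₁ - φ₀⟫ := by
    rw [h2]
    simp only [map_sub, inner_add_right, inner_sub_left, inner_sub_right]
    linarith [hLsym φ₀ φ₁, hLsym φ₁ φ₀, real_inner_comm (L φ₁) φ₁,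
      real_inner_comm (L φ₀) φ₀, real_inner_comm (L φ₁) φ₀, real_inner_comm (L φ₀) φ₁,
      real_inner_comm χ φ₁, real_inner_comm χ φ₀]
  nlinarith [hkey, hexp, heta, hLd]
end

section
/- The second-order Crank–Nicolson 3S-SAV scheme (φⁿ⁺¹ - φⁿ)/Δt = Gμⁿ⁺¹ᐟ², μⁿ⁺¹ᐟ² = L((φⁿ⁺¹ + φⁿ)/2) + χ̃, (ηⁿ⁺¹ - ηⁿ)/Δt = (χ̃, (φⁿ⁺¹ - φⁿ)/Δt) satisfies, for any Δt > 0, [½(φⁿ⁺¹, Lφⁿ⁺¹) + ηⁿ⁺¹] - [½(φⁿ, Lφⁿ) + ηⁿ] ≤ Δt (Gμⁿ⁺¹ᐟ², μⁿ⁺¹ᐟ²) ≤ 0. -/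
open RealInnerProductSpace

/-- discrete energy law for the second-order Crank–Nicolson
3S-SAV scheme: `(φⁿ⁺¹-φⁿ)/Δt = Gμ^{n+1/2}`,
`μ^{n+1/2} = L((φⁿ⁺¹+φⁿ)/2) + χ̃`, `(ηⁿ⁺¹-ηⁿ)/Δt = (χ̃, (φⁿ⁺¹-φⁿ)/Δt)`,
for every `Δt > 0`. -/
theorem threeS_SAV_CN_energy_law
    {H : Type*} [NormedAddCommGroup H] [InnerProductSpace ℝ H]
    (L G : H →ₗ[ℝ] H)
    (hLsym : ∀ u v : H, ⟪L u, v⟫ = ⟪u, L v⟫)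
    (hLnn : ∀ u : H, 0 ≤ ⟪L u, u⟫)
    (hGnp : ∀ v : H, ⟪G v, v⟫ ≤ 0)
    (Δt : ℝ) (hΔt : 0 < Δt)
    (φ₀ φ₁ μhalf χ : H) (η₀ η₁ : ℝ)
    (h1 : (Δt)⁻¹ • (φ₁ - φ₀) = G μhalf)
    (h2 : μhalf = L ((1 / 2 : ℝ) • (φ₁ + φ₀)) + χ)
    (h3 : (η₁ - η₀) / Δt = ⟪χ, (Δt)⁻¹ • (φ₁ - φ₀)⟫) :
    ((1 / 2) * ⟪φ₁, L φ₁⟫ + η₁) - ((1 / 2) * ⟪φ₀, L φ₀⟫ + η₀) ≤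
        Δt * ⟪G μhalf, μhalf⟫ ∧
      Δt * ⟪G μhalf, μhalf⟫ ≤ 0 := by
  have hne : Δt ≠ 0 := ne_of_gt hΔt
  have key : Δt * ⟪G μhalf, μhalf⟫ =
      ((1 / 2) * ⟪φ₁, L φ₁⟫ + η₁) - ((1 / 2) * ⟪φ₀, L φ₀⟫ + η₀) := by
    have h3' : η₁ - η₀ = ⟪χ, φ₁ - φ₀⟫ := by
      rw [real_inner_smul_right] at h3
      field_simp at h3
      linarith [h3]
    have hsym : ⟪L φ₀, φ₁⟫ = ⟪φ₀, L φ₁⟫ := hLsym φ₀ φ₁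
    rw [← h1, h2]
    rw [real_inner_smul_left]
    rw [inner_add_right, map_smul, real_inner_smul_right, map_add,
      inner_sub_left, inner_sub_left, inner_add_right, inner_add_right]
    have hcross : ⟪φ₁, L φ₀⟫ = ⟪φ₀, L φ₁⟫ := by
      rw [← hLsym, real_inner_comm]
    rw [hcross]
    have hcs : ⟪χ, φ₁ - φ₀⟫ = ⟪φ₁, χ⟫ - ⟪φ₀, χ⟫ := by
      rw [inner_sub_right, real_inner_comm χ φ₁, real_inner_comm χ φ₀]
    rw [← mul_assoc, mul_inv_cancel₀ hne, one_mul]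
    rw [hcs] at h3'
    linarith
  have hnp : Δt * ⟪G μhalf, μhalf⟫ ≤ 0 :=
    mul_nonpos_of_nonneg_of_nonpos hΔt.le (hGnp μhalf)
  exact ⟨key.ge, hnp⟩
end

section
/- Let G be a non-positive linear operator and L symmetric non-negative on a real Hilbert space, with Δt > 0. Then for any solution of the implicit equation φⁿ⁺¹ = φⁿ + Δt G(Lφⁿ⁺¹ + χⁿ), the inner product (χⁿ, φⁿ⁺¹ - φⁿ) satisfies (χⁿ, φⁿ⁺¹ - φⁿ) ≤ ½(φⁿ, Lφⁿ) - ½(φⁿ⁺¹, Lφⁿ⁺¹); equivalently the increment of the quadratic energy plus the auxiliary update is non-positive. -/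
open RealInnerProductSpace

/-- for any solution of the implicit equation
`φⁿ⁺¹ = φⁿ + Δt G(Lφⁿ⁺¹ + χⁿ)` with `L` symmetric non-negative and `G`
non-positive, `(χⁿ, φⁿ⁺¹ - φⁿ) ≤ ½(φⁿ, Lφⁿ) - ½(φⁿ⁺¹, Lφⁿ⁺¹)`. -/
theorem implicit_step_increment_nonpositive
    {H : Type*} [NormedAddCommGroup H] [InnerProductSpace ℝ H]
    [CompleteSpace H]
    (L G : H →ₗ[ℝ] H)
    (hLsym : ∀ u v : H, ⟪L u, v⟫ = ⟪u, L v⟫)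
    (hLnn : ∀ u : H, 0 ≤ ⟪L u, u⟫)
    (hGnp : ∀ v : H, ⟪G v, v⟫ ≤ 0)
    (Δt : ℝ) (hΔt : 0 < Δt)
    (χ φ₀ φ₁ : H)
    (h : φ₁ = φ₀ + Δt • G (L φ₁ + χ)) :
    ⟪χ, φ₁ - φ₀⟫ ≤ (1 / 2) * ⟪φ₀, L φ₀⟫ - (1 / 2) * ⟪φ₁, L φ₁⟫ := by
  set μ := L φ₁ + χ with hμ
  have hd : φ₁ - φ₀ = Δt • G μ := by rw [h]; abel
  have h1 : ⟪μ, φ₁ - φ₀⟫ ≤ 0 := by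
    rw [hd, real_inner_smul_right, real_inner_comm]
    exact mul_nonpos_of_nonneg_of_nonpos hΔt.le (hGnp μ)
  have h2 : (0:ℝ) ≤ ⟪L (φ₁ - φ₀), φ₁ - φ₀⟫ := hLnn _
  have e2 : ⟪L (φ₁ - φ₀), φ₁ - φ₀⟫
      = ⟪L φ₁, φ₁⟫ - 2 * ⟪L φ₁, φ₀⟫ + ⟪L φ₀, φ₀⟫ := by
    rw [map_sub, inner_sub_left, inner_sub_right, inner_sub_right]
    have : ⟪L φ₀, φ₁⟫ = ⟪L φ₁, φ₀⟫ := by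
      rw [hLsym φ₀ φ₁, real_inner_comm]
    rw [this]; ring
  have e1 : ⟪μ, φ₁ - φ₀⟫ = ⟪L φ₁, φ₁ - φ₀⟫ + ⟪χ, φ₁ - φ₀⟫ := by
    rw [hμ, inner_add_left]
  have e3 : ⟪L φ₁, φ₁ - φ₀⟫ = ⟪L φ₁, φ₁⟫ - ⟪L φ₁, φ₀⟫ := inner_sub_right _ _ _
  have s0 : ⟪φ₀, L φ₀⟫ = ⟪L φ₀, φ₀⟫ := real_inner_comm _ _
  have s1 : ⟪φ₁, L φ₁⟫ = ⟪L φ₁, φ₁⟫ := real_inner_comm _ _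
  rw [s0, s1]
  nlinarith [h1, h2, e1, e2, e3]
end

section
/- In the first-order 3S-SAV scheme with squared auxiliary variable based on r(t)² = E₁(φ) + C, the update (rⁿ⁺¹)² = (rⁿ)² + (χⁿ, φⁿ⁺¹ - φⁿ) may fail to preserve positivity: there exist symmetric non-negative L, non-positive G, Δt > 0, χⁿ ∈ H and data with (rⁿ)² > 0 such that (rⁿ)² + (χⁿ, φⁿ⁺¹ - φⁿ) < 0, where φⁿ⁺¹ = (I - Δt G L)⁻¹(φⁿ + Δt G χⁿ). -/
/-- Remark 3.1: the square-root 3S-SAV update may fail to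
preserve positivity. In the one-dimensional setting `H = ℝ` (where a
symmetric non-negative `L` is multiplication by `l ≥ 0`, a non-positive `G`
is multiplication by `g ≤ 0`, and the inner product is multiplication),
there exist data with `(rⁿ)² > 0` such that, with
`φⁿ⁺¹ = (I - Δt G L)⁻¹(φⁿ + Δt G χⁿ)`, one has
`(rⁿ)² + (χⁿ, φⁿ⁺¹ - φⁿ) < 0`. -/
theorem threeS_SAV_sqrt_update_may_lose_positivity :
    ∃ l g Δt χ φ₀ r₀sq : ℝ,
      0 ≤ l ∧ g ≤ 0 ∧ 0 < Δt ∧ 0 < r₀sq ∧ 1 - Δt * g * l ≠ 0 ∧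
        r₀sq + χ * ((φ₀ + Δt * g * χ) / (1 - Δt * g * l) - φ₀) < 0 := by
  exact ⟨0, -1, 1, 2, 0, 1, by norm_num, by norm_num, by norm_num, by norm_num,
    by norm_num, by norm_num⟩
end
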